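/- Fix μ < −ln 2 and set g_c = e^μ(1 − e^μ) ∈ (0, 1/4). Then there exist b with g_c < b < 1/4, a real number r ≠ 0, and a function h analytic on the open disc {g ∈ ℂ : |g| < b}, such that for every complex g with |g| < g_c the series Σ_{m=1}^∞ e^{−μm} Y_m(g) converges and equals r/(g_c − g) + h(g); in other words, the generating function W^{(μ)} extends analytically to {|g| < b} \ {g_c} and has a simple pole at g_c. -/

import Mathlib

open scoped Real BigOperators

/-- The generating functions `X_m` of rooted planar trees of height at most `m`:
`X_0 = 0`, `X_1(g) = g`, `X_m(g) = g/(1 - X_{m-1}(g))`. -/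
noncomputable def Xc : ℕ → ℂ → ℂ
  | 0, _ => 0
  | (m + 1), g => g / (1 - Xc m g)

/-- `Y_m(g) = ∏_{k=1}^m X_k(g)`, the generating function of one-sided trees of height `m`. -/
noncomputable def Yc (m : ℕ) (g : ℂ) : ℂ := ∏ k ∈ Finset.Icc 1 m, Xc k g

/-!
Write `g = t (1 - t)`, where `t = (1 - √(1 - 4g)) / 2` is the root of `t² - t + g = 0` of smaller
modulus, and put `a = e^μ`, so that `g_c = a (1 - a)` corresponds to `t = a`. In terms of `t` the
recursion for `X_m` is solved by Binet-type quotients of `(1 - t)^k - t^k`, and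
`a^{-m} Y_m = (1 - 2t)/(1 - t) · (t/a)^m + O((t² / (a (1 - t)))^m)`.
The geometric part sums to `(1 - 2t) t / ((1 - t)(a - t))`, which has a simple pole at `t = a`.
If `|g| ≤ τ(1 - τ)` with `τ < 1/2` then `|t| ≤ τ`; since `a² < a (1 - a)`, some `τ > a` still has
`τ² < a (1 - τ)`, so the remainder series converges uniformly on the disc of radius `τ(1 - τ) > g_c`.
-/

open Complex Metric

lemma one_sub_le_norm_one_sub {x : ℂ} {T : ℝ} (hx : ‖x‖ ≤ T) : 1 - T ≤ ‖1 - x‖ := by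
  linarith [norm_sub_norm_le (1 : ℂ) x, norm_one (α := ℂ)]

lemma one_sub_four_mul_norm_le_re (g : ℂ) : 1 - 4 * ‖g‖ ≤ (1 - 4 * g).re := by
  have : (1 - 4 * g).re = 1 - 4 * g.re := by simp
  linarith [re_le_norm g]

noncomputable def smallRoot (g : ℂ) : ℂ := (1 - Complex.sqrt (1 - 4 * g)) / 2

lemma smallRoot_mul_one_sub (g : ℂ) : smallRoot g * (1 - smallRoot g) = g := by
  have h : Complex.sqrt (1 - 4 * g) ^ 2 = 1 - 4 * g := cpow_ofNat_inv_pow _ 2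
  unfold smallRoot
  linear_combination (-1 / 4 : ℂ) * h

lemma one_sub_le_norm_one_sub_smallRoot {g : ℂ} {τ : ℝ} (hg : ‖g‖ ≤ τ * (1 - τ)) :
    1 - τ ≤ ‖1 - smallRoot g‖ := by
  have hw : (1 - 2 * τ) ^ 2 ≤ (1 - 4 * g).re := by
    nlinarith [one_sub_four_mul_norm_le_re g]
  have hre : 1 - 2 * τ ≤ (Complex.sqrt (1 - 4 * g)).re := by
    rw [Complex.sqrt, cpow_inv_two_re]
    exact Real.le_sqrt_of_sq_le (by linarith [re_le_norm (1 - 4 * g)])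
  calc 1 - τ ≤ (1 - smallRoot g).re := by
        simp only [smallRoot, sub_re, one_re, div_re]; norm_num; linarith
    _ ≤ ‖1 - smallRoot g‖ := re_le_norm _

lemma norm_smallRoot_le {g : ℂ} {τ : ℝ} (hτ : τ ≤ 1 / 2) (hg : ‖g‖ ≤ τ * (1 - τ)) :
    ‖smallRoot g‖ ≤ τ := by
  have hu := one_sub_le_norm_one_sub_smallRoot hg
  have hprod : ‖smallRoot g‖ * ‖1 - smallRoot g‖ = ‖g‖ := by
    rw [← norm_mul, smallRoot_mul_one_sub]
  nlinarith [norm_nonneg (smallRoot g)]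

lemma norm_smallRoot_lt {g : ℂ} {τ : ℝ} (hτ : τ ≤ 1 / 2) (hg : ‖g‖ < τ * (1 - τ)) :
    ‖smallRoot g‖ < τ := by
  have hu := one_sub_le_norm_one_sub_smallRoot hg.le
  have hprod : ‖smallRoot g‖ * ‖1 - smallRoot g‖ = ‖g‖ := by
    rw [← norm_mul, smallRoot_mul_one_sub]
  nlinarith [norm_nonneg (smallRoot g)]

lemma analyticAt_smallRoot {g : ℂ} (hg : ‖g‖ < 1 / 4) : AnalyticAt ℂ smallRoot g := by
  have hslit : 1 - 4 * g ∈ slitPlane := by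
    refine mem_slitPlane_iff.mpr (Or.inl ?_)
    linarith [one_sub_four_mul_norm_le_re g]
  exact (analyticAt_const.sub ((analyticAt_const.sub (analyticAt_const.mul analyticAt_id)).cpow
    analyticAt_const hslit)).div analyticAt_const two_ne_zero

lemma sub_ne_zero_of_norm_lt {𝕜 : Type*} [NormedAddCommGroup 𝕜] {x y : 𝕜} (h : ‖x‖ < ‖y‖) :
    y - x ≠ 0 :=
  sub_ne_zero.mpr fun e => (e ▸ h).false

lemma pow_sub_pow_ne_zero_of_norm_lt {𝕜 : Type*} [NormedDivisionRing 𝕜] {t u : 𝕜}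
    (h : ‖t‖ < ‖u‖) {n : ℕ} (hn : n ≠ 0) : u ^ n - t ^ n ≠ 0 := by
  apply sub_ne_zero_of_norm_lt
  rw [norm_pow, norm_pow]
  exact pow_lt_pow_left₀ h (norm_nonneg t) hn

lemma norm_lt_norm_one_sub {x y : ℂ} (hx : ‖x‖ < 1 / 2) (hy : ‖y‖ ≤ 1 / 2) : ‖x‖ < ‖1 - y‖ := by
  linarith [one_sub_le_norm_one_sub hy]

lemma Xc_mul_one_sub {t : ℂ} (ht : ‖t‖ < ‖1 - t‖) (m : ℕ) :
    Xc m (t * (1 - t)) =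
      t * (1 - t) * ((1 - t) ^ m - t ^ m) / ((1 - t) ^ (m + 1) - t ^ (m + 1)) := by
  induction m with
  | zero => simp [Xc]
  | succ m ih =>
    have hD := pow_sub_pow_ne_zero_of_norm_lt ht m.succ_ne_zero
    rw [Xc, ih]
    -- `D_{m+2} = D_{m+1} - t (1 - t) D_m` for `D_k = (1 - t)^k - t^k`
    have hrec : 1 - t * (1 - t) * ((1 - t) ^ m - t ^ m) / ((1 - t) ^ (m + 1) - t ^ (m + 1)) =
        ((1 - t) ^ (m + 2) - t ^ (m + 2)) / ((1 - t) ^ (m + 1) - t ^ (m + 1)) := by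
      field_simp
      ring
    rw [hrec]
    field_simp

lemma Yc_mul_one_sub {t : ℂ} (ht : ‖t‖ < ‖1 - t‖) (m : ℕ) :
    Yc m (t * (1 - t)) = (t * (1 - t)) ^ m * (1 - 2 * t) / ((1 - t) ^ (m + 1) - t ^ (m + 1)) := by
  induction m with
  | zero =>
    have h := pow_sub_pow_ne_zero_of_norm_lt ht one_ne_zero
    rw [pow_one, pow_one, sub_sub, ← two_mul] at h
    simp [Yc, sub_sub, ← two_mul, h]
  | succ m ih =>
    have hD := pow_sub_pow_ne_zero_of_norm_lt ht m.succ_ne_zero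
    rw [Yc, Finset.prod_Icc_succ_top (Nat.le_add_left 1 m), ← Yc, ih, Xc_mul_one_sub ht]
    field_simp
    ring

noncomputable def tailTerm (a t : ℂ) (m : ℕ) : ℂ :=
  (1 - 2 * t) * t ^ (2 * m + 1) / (a ^ m * (1 - t) * ((1 - t) ^ (m + 1) - t ^ (m + 1)))

lemma inv_pow_mul_Yc_mul_one_sub {a t : ℂ} (ha : a ≠ 0) (ht : ‖t‖ < ‖1 - t‖) (m : ℕ) :
    a⁻¹ ^ m * Yc m (t * (1 - t)) = (1 - 2 * t) / (1 - t) * (t / a) ^ m + tailTerm a t m := by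
  have hD := pow_sub_pow_ne_zero_of_norm_lt ht m.succ_ne_zero
  have h1t : 1 - t ≠ 0 := norm_pos_iff.mp ((norm_nonneg t).trans_lt ht)
  rw [Yc_mul_one_sub ht, tailTerm, inv_pow, mul_pow, div_pow]
  field_simp
  ring

lemma norm_one_sub_pow_sub_pow_ge {t : ℂ} {T : ℝ} (ht : ‖t‖ ≤ T) (hT : T ≤ 1 / 2) (m : ℕ) :
    (1 - T) ^ m * (1 - 2 * T) ≤ ‖(1 - t) ^ (m + 1) - t ^ (m + 1)‖ := by
  have h1t : 1 - T ≤ ‖1 - t‖ := one_sub_le_norm_one_sub ht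
  have hT0 : 0 ≤ T := (norm_nonneg t).trans ht
  calc (1 - T) ^ m * (1 - 2 * T) ≤ (1 - T) ^ (m + 1) - T ^ (m + 1) := by
        have : T ^ m ≤ (1 - T) ^ m := pow_le_pow_left₀ hT0 (by linarith) m
        rw [pow_succ, pow_succ]; nlinarith
    _ ≤ ‖1 - t‖ ^ (m + 1) - ‖t‖ ^ (m + 1) := by
        gcongr
        linarith
    _ ≤ ‖(1 - t) ^ (m + 1) - t ^ (m + 1)‖ := by
        simpa only [norm_pow] using norm_sub_norm_le ((1 - t) ^ (m + 1)) (t ^ (m + 1))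

lemma norm_tailTerm_le {a t : ℂ} {T : ℝ} (ha : a ≠ 0) (ht : ‖t‖ ≤ T) (hT : T < 1 / 2)
    (m : ℕ) :
    ‖tailTerm a t m‖ ≤ 2 * T / ((1 - T) * (1 - 2 * T)) * (T ^ 2 / (‖a‖ * (1 - T))) ^ m := by
  have hT0 : 0 ≤ T := (norm_nonneg t).trans ht
  have hT1 : 0 < 1 - T := by linarith
  have hT2 : 0 < 1 - 2 * T := by linarith
  have ha0 : 0 < ‖a‖ := norm_pos_iff.mpr ha
  have hnum : ‖1 - 2 * t‖ * ‖t‖ ^ (2 * m + 1) ≤ 2 * T ^ (2 * m + 1) := by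
    have : ‖1 - 2 * t‖ ≤ 2 := by
      calc ‖1 - 2 * t‖ ≤ ‖(1 : ℂ)‖ + ‖2 * t‖ := norm_sub_le _ _
        _ ≤ 2 := by simp; linarith
    gcongr
  have hden : ‖a‖ ^ m * (1 - T) * ((1 - T) ^ m * (1 - 2 * T)) ≤
      ‖a‖ ^ m * ‖1 - t‖ * ‖(1 - t) ^ (m + 1) - t ^ (m + 1)‖ := by
    have h1t : 1 - T ≤ ‖1 - t‖ := one_sub_le_norm_one_sub ht
    gcongr
    exact norm_one_sub_pow_sub_pow_ge ht hT.le m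
  calc ‖tailTerm a t m‖
      = ‖1 - 2 * t‖ * ‖t‖ ^ (2 * m + 1) /
          (‖a‖ ^ m * ‖1 - t‖ * ‖(1 - t) ^ (m + 1) - t ^ (m + 1)‖) := by
        simp only [tailTerm, norm_div, norm_mul, norm_pow]
    _ ≤ 2 * T ^ (2 * m + 1) / (‖a‖ ^ m * (1 - T) * ((1 - T) ^ m * (1 - 2 * T))) :=
        div_le_div₀ (by positivity) hnum (by positivity) hden
    _ = 2 * T / ((1 - T) * (1 - 2 * T)) * (T ^ 2 / (‖a‖ * (1 - T))) ^ m := by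
        rw [div_pow, mul_pow, ← pow_mul]
        field_simp
        ring

/-- `(1 - 2t) t / ((1 - t)(a - t))` minus its principal part `r / ((a - t)(1 - a - t))` at `t = a`,
`r = a (1 - 2a)² / (1 - a)`, after cancelling the common factor `a - t`. -/
noncomputable def poleRemainder (a t : ℂ) : ℂ :=
  -(2 * t ^ 2 + (4 * a - 3) * t + (1 - 2 * a) ^ 2 / (1 - a)) / ((1 - t) * (1 - a - t))

lemma hasSum_pole_part {a t : ℂ} (hta : ‖t‖ < ‖a‖) (ha : ‖a‖ ≤ 1 / 2) :
    HasSum (fun m : ℕ => (1 - 2 * t) / (1 - t) * (t / a) ^ (m + 1))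
      (a * (1 - 2 * a) ^ 2 / (1 - a) / (a * (1 - a) - t * (1 - t)) + poleRemainder a t) := by
  have hta' : ‖t / a‖ < 1 := by
    rw [norm_div]; exact (div_lt_one ((norm_nonneg t).trans_lt hta)).mpr hta
  have ha0 : a ≠ 0 := norm_pos_iff.mp ((norm_nonneg t).trans_lt hta)
  have hat : a - t ≠ 0 := sub_ne_zero_of_norm_lt hta
  have ht1 : 1 - t ≠ 0 := sub_ne_zero_of_norm_lt (by simp; linarith)
  have ha1 : 1 - a ≠ 0 := sub_ne_zero_of_norm_lt (by simp; linarith)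
  have hat1 : 1 - a - t ≠ 0 := sub_ne_zero_of_norm_lt (norm_lt_norm_one_sub (hta.trans_le ha) ha)
  have hvalue : a * (1 - 2 * a) ^ 2 / (1 - a) / (a * (1 - a) - t * (1 - t)) + poleRemainder a t =
      (1 - 2 * t) / (1 - t) * (t / a) * (1 - t / a)⁻¹ := by
    rw [show a * (1 - a) - t * (1 - t) = (a - t) * (1 - a - t) by ring, poleRemainder]
    field_simp
    ring
  simp_rw [hvalue, pow_succ', ← mul_assoc]
  exact (hasSum_geometric_of_norm_lt_one hta').mul_left _

lemma analyticAt_tailTerm {a t : ℂ} (ha : a ≠ 0) (ht : ‖t‖ < 1 / 2) (m : ℕ) :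
    AnalyticAt ℂ (fun t => tailTerm a t m) t := by
  have h1t : 1 - t ≠ 0 := sub_ne_zero_of_norm_lt (by simp; linarith)
  have hD := pow_sub_pow_ne_zero_of_norm_lt (norm_lt_norm_one_sub ht ht.le) m.succ_ne_zero
  exact AnalyticAt.div (by fun_prop) (by fun_prop) (by simp [ha, h1t, hD])

lemma analyticAt_poleRemainder {a t : ℂ} (ha : ‖a‖ ≤ 1 / 2) (ht : ‖t‖ < 1 / 2) :
    AnalyticAt ℂ (poleRemainder a) t := by
  have h1t : 1 - t ≠ 0 := sub_ne_zero_of_norm_lt (by simp; linarith)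
  have hat : 1 - a - t ≠ 0 := sub_ne_zero_of_norm_lt (norm_lt_norm_one_sub ht ha)
  exact AnalyticAt.div (by fun_prop) (by fun_prop) (mul_ne_zero h1t hat)

lemma norm_smallRoot_lt_half {g : ℂ} (hg : ‖g‖ < 1 / 4) : ‖smallRoot g‖ < 1 / 2 :=
  norm_smallRoot_lt le_rfl (by linarith)

lemma analyticOnNhd_tailTerm_smallRoot {a : ℂ} (ha : a ≠ 0) (m : ℕ) :
    AnalyticOnNhd ℂ (fun g => tailTerm a (smallRoot g) m) (ball 0 (1 / 4)) := fun g hg => by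
  rw [mem_ball_zero_iff] at hg
  exact (analyticAt_tailTerm ha (norm_smallRoot_lt_half hg) m).comp (analyticAt_smallRoot hg)

lemma analyticOnNhd_poleRemainder_smallRoot {a : ℂ} (ha : ‖a‖ ≤ 1 / 2) :
    AnalyticOnNhd ℂ (fun g => poleRemainder a (smallRoot g)) (ball 0 (1 / 4)) := fun g hg => by
  rw [mem_ball_zero_iff] at hg
  exact (analyticAt_poleRemainder ha (norm_smallRoot_lt_half hg)).comp (analyticAt_smallRoot hg)

lemma ball_mul_one_sub_subset_ball_quarter (τ : ℝ) :
    ball (0 : ℂ) (τ * (1 - τ)) ⊆ ball 0 (1 / 4) :=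
  ball_subset_ball (by nlinarith [sq_nonneg (τ - 1 / 2)])

lemma exists_gt_sq_lt_mul_one_sub {a : ℝ} (ha0 : 0 < a) (ha : a < 1 / 2) :
    ∃ τ, a < τ ∧ τ < 1 / 2 ∧ τ ^ 2 < a * (1 - τ) := by
  have hd : 0 < 1 - 2 * a := by linarith
  refine ⟨a + a * (1 - 2 * a) / 4, by nlinarith, by nlinarith, ?_⟩
  nlinarith [mul_pos ha0 hd, mul_pos (mul_pos ha0 hd) ha0, mul_pos (mul_pos ha0 hd) (mul_pos ha0 hd)]

noncomputable def tailSum (a g : ℂ) : ℂ := ∑' m : ℕ, tailTerm a (smallRoot g) (m + 1)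

section TailSum

variable {a : ℂ} {τ : ℝ} (ha : a ≠ 0) (hτ : τ < 1 / 2) (hρ : τ ^ 2 < ‖a‖ * (1 - τ))
include ha hτ hρ

lemma exists_summable_bound_tailTerm_smallRoot :
    ∃ u : ℕ → ℝ, Summable u ∧
      ∀ m (g : ℂ), ‖g‖ ≤ τ * (1 - τ) → ‖tailTerm a (smallRoot g) (m + 1)‖ ≤ u m := by
  have ha0 : 0 < ‖a‖ := norm_pos_iff.mpr ha
  have hratio : τ ^ 2 / (‖a‖ * (1 - τ)) < 1 := (div_lt_one (by nlinarith)).mpr hρ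
  refine ⟨fun m => 2 * τ / ((1 - τ) * (1 - 2 * τ)) * (τ ^ 2 / (‖a‖ * (1 - τ))) ^ (m + 1),
    ?_, fun m g hg => norm_tailTerm_le ha (norm_smallRoot_le hτ.le hg) hτ (m + 1)⟩
  have hτ1 : 0 < 1 - τ := by linarith
  exact ((summable_geometric_of_lt_one (by positivity) hratio).mul_left _).comp_injective
    (add_left_injective 1)

lemma hasSum_tailSum {g : ℂ} (hg : ‖g‖ ≤ τ * (1 - τ)) :
    HasSum (fun m => tailTerm a (smallRoot g) (m + 1)) (tailSum a g) := by
  obtain ⟨u, hu, hbound⟩ := exists_summable_bound_tailTerm_smallRoot ha hτ hρ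
  exact (hu.of_norm_bounded fun m => hbound m g hg).hasSum

lemma analyticOnNhd_tailSum : AnalyticOnNhd ℂ (tailSum a) (ball 0 (τ * (1 - τ))) := by
  obtain ⟨u, hu, hbound⟩ := exists_summable_bound_tailTerm_smallRoot ha hτ hρ
  refine (differentiableOn_tsum_of_summable_norm hu (fun m => ?_) isOpen_ball
    (fun m g hg => hbound m g (mem_ball_zero_iff.mp hg).le)).analyticOnNhd isOpen_ball
  exact ((analyticOnNhd_tailTerm_smallRoot ha (m + 1)).mono
    (ball_mul_one_sub_subset_ball_quarter τ)).differentiableOn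

lemma hasSum_inv_pow_mul_Yc {g : ℂ} (hg : ‖g‖ ≤ τ * (1 - τ)) (hga : ‖smallRoot g‖ < ‖a‖)
    (ha2 : ‖a‖ ≤ 1 / 2) :
    HasSum (fun m : ℕ => a⁻¹ ^ (m + 1) * Yc (m + 1) g)
      (a * (1 - 2 * a) ^ 2 / (1 - a) / (a * (1 - a) - g) +
        (poleRemainder a (smallRoot g) + tailSum a g)) := by
  have hlt : ‖smallRoot g‖ < ‖1 - smallRoot g‖ :=
    norm_lt_norm_one_sub (hga.trans_le ha2) (hga.trans_le ha2).le
  have hterm : ∀ m : ℕ, a⁻¹ ^ m * Yc m g = (1 - 2 * smallRoot g) / (1 - smallRoot g) *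
      (smallRoot g / a) ^ m + tailTerm a (smallRoot g) m := fun m => by
    have := inv_pow_mul_Yc_mul_one_sub ha hlt m
    rwa [smallRoot_mul_one_sub] at this
  have hsum := (hasSum_pole_part hga ha2).add (hasSum_tailSum ha hτ hρ hg)
  rw [smallRoot_mul_one_sub, add_assoc] at hsum
  simpa only [hterm] using hsum

end TailSum

theorem W_simple_pole (μ : ℝ) (hμ : μ < -Real.log 2)
    (gc : ℝ) (hgc : gc = Real.exp μ * (1 - Real.exp μ)) :
    ∃ b : ℝ, gc < b ∧ b < 1 / 4 ∧
      ∃ r : ℝ, r ≠ 0 ∧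
        ∃ h : ℂ → ℂ, AnalyticOnNhd ℂ h (Metric.ball (0 : ℂ) b) ∧
          ∀ g : ℂ, ‖g‖ < gc →
            HasSum (fun m : ℕ => (Real.exp (-μ * (m + 1)) : ℂ) * Yc (m + 1) g)
              ((r : ℂ) / ((gc : ℂ) - g) + h g) := by
  subst hgc
  set a := Real.exp μ with ha_def
  have ha0 : 0 < a := Real.exp_pos μ
  have ha2 : a < 1 / 2 := by
    calc a < Real.exp (-Real.log 2) := Real.exp_lt_exp.mpr hμ
      _ = 1 / 2 := by rw [Real.exp_neg, Real.exp_log two_pos, one_div]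
  have haC : (a : ℂ) ≠ 0 := Complex.ofReal_ne_zero.mpr ha0.ne'
  have hnorm_a : ‖(a : ℂ)‖ = a := by simp [abs_of_pos ha0]
  obtain ⟨τ, haτ, hτ, hρ⟩ := exists_gt_sq_lt_mul_one_sub ha0 ha2
  rw [← hnorm_a] at hρ
  have hr : 0 < a * (1 - 2 * a) ^ 2 / (1 - a) :=
    div_pos (mul_pos ha0 (pow_pos (by linarith) 2)) (by linarith)
  refine ⟨τ * (1 - τ), by nlinarith, by nlinarith [sq_nonneg (τ - 1 / 2)],
    a * (1 - 2 * a) ^ 2 / (1 - a), hr.ne',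
    fun g => poleRemainder a (smallRoot g) + tailSum a g,
    ((analyticOnNhd_poleRemainder_smallRoot (by linarith)).mono
      (ball_mul_one_sub_subset_ball_quarter τ)).add (analyticOnNhd_tailSum haC hτ hρ),
    fun g hg => ?_⟩
  have hexp : ∀ m : ℕ, (Real.exp (-μ * (m + 1)) : ℂ) = (a : ℂ)⁻¹ ^ (m + 1) := fun m => by
    rw [← ofReal_inv, ← ofReal_pow, ha_def, ← Real.exp_neg, ← Real.exp_nat_mul]; push_cast; ring_nf
  have hga : ‖smallRoot g‖ < ‖(a : ℂ)‖ := by rw [hnorm_a]; exact norm_smallRoot_lt ha2.le hg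
  simp_rw [hexp]
  convert hasSum_inv_pow_mul_Yc haC hτ hρ (by nlinarith) hga (by linarith) using 2
  push_cast
  ring
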